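/- Let R be a stably finite (possibly noncommutative) ring, let n ≥ 1, let A = (a₁,…,aₙ) be a row vector over R, and let B be an n×(n−1) matrix over R. Assume the row–matrix product A·B is zero and that a₁ is a unit of R. Let B' be the (n−1)×(n−1) submatrix of B obtained by deleting the first row of B. Then the following are equivalent: (i) B' has a two-sided inverse over R; (ii) the complex 0 → R^{n−1} → Rⁿ → R → 0 with maps w ↦ B·w and v ↦ ∑ⱼ aⱼ·vⱼ is acyclic, i.e. w ↦ B·w is injective, the kernel of v ↦ ∑ⱼ aⱼ·vⱼ equals the image of w ↦ B·w, and v ↦ ∑ⱼ aⱼ·vⱼ is surjective; (iii) the kernel of v ↦ ∑ⱼ aⱼ·vⱼ equals the image of w ↦ B·w. -/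

import Mathlib

/-!
Since `A ᵥ* B = 0`, the map `w ↦ B *ᵥ w` lands in the kernel of `v ↦ A ⬝ᵥ v`, and since `A 0`
is a unit, a kernel vector is determined by its tail `v ∘ Fin.succ`, and every tail occurs. Under
this identification of the kernel with `Fin n → R`, the map `w ↦ B *ᵥ w` becomes `B'`. So if `B'`
is invertible we get injectivity and exactness, while surjectivity of `v ↦ A ⬝ᵥ v` holds for any
`A` with a unit entry. Conversely, exactness makes `B'` surjective, hence `B'` has a right
inverse, which stable finiteness turns into a two-sided one.
-/

open Matrix

section

variable {R : Type*} [Ring R] {n : ℕ}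

theorem submatrix_succ_mulVec (B : Matrix (Fin (n + 1)) (Fin n) R) (w : Fin n → R) :
    B.submatrix Fin.succ id *ᵥ w = vecTail (B *ᵥ w) :=
  rfl

theorem dotProduct_mulVec_eq_zero {ι κ : Type*} [Fintype ι] [Fintype κ] {A : ι → R}
    {B : Matrix ι κ R} (hAB : A ᵥ* B = 0) (w : κ → R) : A ⬝ᵥ (B *ᵥ w) = 0 := by
  rw [dotProduct_mulVec, hAB, zero_dotProduct]

theorem dotProduct_surjective_of_isUnit {ι : Type*} [Fintype ι] [DecidableEq ι] {A : ι → R}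
    {i : ι} (ha : IsUnit (A i)) : Function.Surjective (dotProduct A) := fun r =>
  ⟨Pi.single i (↑ha.unit⁻¹ * r), by rw [dotProduct_single, ← mul_assoc, ha.mul_val_inv, one_mul]⟩

theorem eq_of_dotProduct_eq_of_vecTail_eq {A u v : Fin (n + 1) → R} (ha : IsUnit (A 0))
    (h : A ⬝ᵥ u = A ⬝ᵥ v) (ht : vecTail u = vecTail v) : u = v := by
  rw [← cons_head_tail u, ← cons_head_tail v, dotProduct_cons, dotProduct_cons, ht,
    add_left_inj] at h
  rw [← cons_head_tail u, ← cons_head_tail v, ha.mul_left_cancel h, ht]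

theorem dotProduct_cons_neg_eq_zero {A : Fin (n + 1) → R} (ha : IsUnit (A 0)) (t : Fin n → R) :
    A ⬝ᵥ vecCons (-(↑ha.unit⁻¹ * (vecTail A ⬝ᵥ t))) t = 0 := by
  rw [dotProduct_cons, vecHead, mul_neg, ← mul_assoc, ha.mul_val_inv, one_mul, neg_add_cancel]

variable {A : Fin (n + 1) → R} {B : Matrix (Fin (n + 1)) (Fin n) R}

theorem mulVec_injective_of_mul_submatrix_succ_eq_one {D : Matrix (Fin n) (Fin n) R}
    (hDB : D * B.submatrix Fin.succ id = 1) : Function.Injective B.mulVec := by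
  intro w₁ w₂ h
  have key (w : Fin n → R) : D *ᵥ vecTail (B *ᵥ w) = w := by
    rw [← submatrix_succ_mulVec, mulVec_mulVec, hDB, one_mulVec]
  rw [← key w₁, ← key w₂]
  exact congrArg (fun v => D *ᵥ vecTail v) h

theorem setOf_dotProduct_eq_zero_eq_range_mulVec (hAB : A ᵥ* B = 0) (ha : IsUnit (A 0))
    {D : Matrix (Fin n) (Fin n) R} (hBD : B.submatrix Fin.succ id * D = 1) :
    {v | A ⬝ᵥ v = 0} = Set.range B.mulVec := by
  ext v
  refine ⟨fun hv => ⟨D *ᵥ vecTail v, ?_⟩, ?_⟩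
  · refine eq_of_dotProduct_eq_of_vecTail_eq ha ?_ ?_
    · rw [dotProduct_mulVec_eq_zero hAB, hv.out]
    · rw [← submatrix_succ_mulVec, mulVec_mulVec, hBD, one_mulVec]
  · rintro ⟨w, rfl⟩
    exact dotProduct_mulVec_eq_zero hAB w

theorem submatrix_succ_mulVec_surjective (ha : IsUnit (A 0))
    (hker : {v | A ⬝ᵥ v = 0} = Set.range B.mulVec) :
    Function.Surjective (B.submatrix Fin.succ id).mulVec := by
  intro t
  have hmem : vecCons _ t ∈ {v | A ⬝ᵥ v = 0} := dotProduct_cons_neg_eq_zero ha t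
  obtain ⟨w, hw⟩ := hker ▸ hmem
  exact ⟨w, by rw [submatrix_succ_mulVec, hw, tail_cons]⟩

end

/-- The analogue of Lemma 2.3 of the paper for chain complexes of length two.  Let `R` be a
stably finite ring, `n ≥ 1`, `A` a row vector of length `n` with `a₁` a unit, and `B` an
`n × (n-1)` matrix with `A · B = 0`.  Let `B'` be the `(n-1) × (n-1)` matrix obtained from
`B` by deleting the first row.  Then: `B'` has a two-sided inverse over `R` iff the complex
`0 → R^{n-1} → Rⁿ → R → 0` is acyclic, and this in turn holds iff the kernel of
`v ↦ ∑ⱼ aⱼ vⱼ` equals the image of `w ↦ B ⬝ w`. -/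
theorem submatrix_invertible_iff_acyclic_length_two (R : Type*) [Ring R]
    (hsf : ∀ (m : ℕ) (X Y : Matrix (Fin m) (Fin m) R), X * Y = 1 → Y * X = 1)
    (n : ℕ)
    (A : Fin (n + 1) → R) (B : Matrix (Fin (n + 1)) (Fin n) R)
    (hAB : ∀ j, ∑ i, A i * B i j = 0)
    (ha : IsUnit (A 0)) :
    ((∃ D : Matrix (Fin n) (Fin n) R,
        B.submatrix Fin.succ id * D = 1 ∧ D * B.submatrix Fin.succ id = 1) ↔
      (Function.Injective (fun w : Fin n → R => B.mulVec w) ∧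
       {v : Fin (n + 1) → R | ∑ j, A j * v j = 0} =
          Set.range (fun w : Fin n → R => B.mulVec w) ∧
       Function.Surjective (fun v : Fin (n + 1) → R => ∑ j, A j * v j))) ∧
    ((∃ D : Matrix (Fin n) (Fin n) R,
        B.submatrix Fin.succ id * D = 1 ∧ D * B.submatrix Fin.succ id = 1) ↔
      {v : Fin (n + 1) → R | ∑ j, A j * v j = 0} =
        Set.range (fun w : Fin n → R => B.mulVec w)) := by
  have hAB' : A ᵥ* B = 0 := funext hAB
  have acyclic_of_invertible : (∃ D : Matrix (Fin n) (Fin n) R,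
      B.submatrix Fin.succ id * D = 1 ∧ D * B.submatrix Fin.succ id = 1) →
      Function.Injective B.mulVec ∧ {v | A ⬝ᵥ v = 0} = Set.range B.mulVec ∧
        Function.Surjective (dotProduct A) := fun ⟨_, hBD, hDB⟩ =>
    ⟨mulVec_injective_of_mul_submatrix_succ_eq_one hDB,
      setOf_dotProduct_eq_zero_eq_range_mulVec hAB' ha hBD, dotProduct_surjective_of_isUnit ha⟩
  have invertible_of_exact (hker : {v | A ⬝ᵥ v = 0} = Set.range B.mulVec) :
      ∃ D : Matrix (Fin n) (Fin n) R,
        B.submatrix Fin.succ id * D = 1 ∧ D * B.submatrix Fin.succ id = 1 := by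
    obtain ⟨D, hBD⟩ :=
      mulVec_surjective_iff_exists_right_inverse.mp (submatrix_succ_mulVec_surjective ha hker)
    exact ⟨D, hBD, hsf n _ _ hBD⟩
  exact ⟨⟨acyclic_of_invertible, fun h => invertible_of_exact h.2.1⟩,
    ⟨fun h => (acyclic_of_invertible h).2.1, invertible_of_exact⟩⟩
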